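/- arXiv:2112.12587 — 2 statements merged into one kernel-verified Lean document; each statement's English description precedes it below -/
import Mathlib

section
/- (1) If F_1 and F_2 are forest-algebras with dis(F_1,F_2) < ∞, then there is a witnessing path of minimal length consisting only of forest-algebras: there exist monounary algebras A_0, …, A_n with n = dis(F_1,F_2), A_0 ≅ F_1, A_n ≅ F_2, each A_i a forest-algebra, and for each i < n either A_i ⋖ A_{i+1} or A_{i+1} ⋖ A_i. (2) The same holds for tree-algebras: if T_1 and T_2 are tree-algebras with dis(T_1,T_2) < ∞, then some minimal-length witnessing path consists only of tree-algebras. -/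
/-- A monounary algebra: a type equipped with one unary operation. -/
structure MonoUnary : Type 1 where
  carrier : Type
  op : carrier → carrier

namespace MonoUnary

/-- The subalgebra of `A` generated by `X`: the closure of `X` under the operation. -/
def closure (A : MonoUnary) (X : Set A.carrier) : Set A.carrier :=
  {y | ∃ x ∈ X, ∃ n : ℕ, A.op^[n] x = y}

/-- Isomorphism of monounary algebras. -/
def Iso (A B : MonoUnary) : Prop :=
  ∃ e : A.carrier ≃ B.carrier, ∀ x, e (A.op x) = B.op (e x)

/-- The monounary algebra induced on a subset closed under the operation. -/
def restrict (B : MonoUnary) (S : Set B.carrier) (hS : ∀ x ∈ S, B.op x ∈ S) : MonoUnary where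
  carrier := ↥S
  op := fun x => ⟨B.op x.1, hS x.1 x.2⟩

/-- `A` is largely embeddable into `B`: `B` has a large subalgebra isomorphic to `A`,
i.e. a (nonempty, closed) subset `S` such that together with one extra element `b`
it generates the whole of `B`. -/
def LargeEmb (A B : MonoUnary) : Prop :=
  ∃ (S : Set B.carrier) (hS : ∀ x ∈ S, B.op x ∈ S), S.Nonempty ∧
    Iso A (B.restrict S hS) ∧ ∃ b : B.carrier, B.closure (S ∪ {b}) = Set.univ

/-- One step in the network of large embeddings (symmetric closure of `⋖`). -/
def Step (A B : MonoUnary) : Prop := LargeEmb A B ∨ LargeEmb B A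

/-- There is a path of length `n` between `A` and `B` in the network. -/
def HasPath (A B : MonoUnary) (n : ℕ) : Prop :=
  ∃ C : ℕ → MonoUnary, Iso (C 0) A ∧ Iso (C n) B ∧ ∀ i < n, Step (C i) (C (i + 1))

/-- The generator distance between monounary algebras, in `ℕ ∪ {∞}`. -/
noncomputable def dis (A B : MonoUnary) : ℕ∞ :=
  sInf {q : ℕ∞ | ∃ n : ℕ, q = (n : ℕ∞) ∧ HasPath A B n}

/-- The minimum number of generators of `A`, `∞` if `A` is not finitely generated. -/
noncomputable def MGen (A : MonoUnary) : ℕ∞ :=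
  sInf {q : ℕ∞ | ∃ X : Finset A.carrier, q = (X.card : ℕ∞) ∧ A.closure ↑X = Set.univ}

/-- A monounary algebra is connected iff any two elements have trajectories that meet. -/
def Connected (A : MonoUnary) : Prop :=
  ∀ a b : A.carrier, ∃ k m : ℕ, A.op^[k] a = A.op^[m] b

end MonoUnary

namespace MonoUnary

/-- A tree-algebra: a connected monounary algebra containing a fixed point of its
operation (its root). -/
def IsTree (T : MonoUnary) : Prop := Connected T ∧ ∃ c, T.op c = c

/-- A forest-algebra: every connected component is a tree-algebra, i.e. every element
is related to some fixed point of the operation. -/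
def IsForest (F : MonoUnary) : Prop :=
  ∀ x : F.carrier, ∃ c, F.op c = c ∧ ∃ k m : ℕ, F.op^[k] x = F.op^[m] c

end MonoUnary

/-!
Inside each connected component, identify all elements lying on a cycle, and all elements of a
component without a cycle, to a single fixed point; identifying them globally instead gives the
tree version. The quotient is a forest (a tree, when nonempty) and is the identity on forests
(trees). The identifications are invariant under injective homomorphisms, so the quotient
carries large subalgebras to large subalgebras, hence maps a path of minimal length to one of
the same length.
-/

open Function Set

theorem Function.Injective.mem_periodicPts_iff {α β : Type*} {fa : α → α} {fb : β → β}
    {g : α → β} (hg : Injective g) (h : Semiconj g fa fb) {x : α} :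
    g x ∈ periodicPts fb ↔ x ∈ periodicPts fa := by
  refine ⟨fun ⟨n, hn, hx⟩ => ⟨n, hn, hg ?_⟩, fun hx => h.mapsTo_periodicPts hx⟩
  rw [(h.iterate_right n) x]
  exact hx

namespace MonoUnary

section Iso

variable {A B C : MonoUnary}

theorem Iso.symm : Iso A B → Iso B A
  | ⟨e, he⟩ => ⟨e.symm, Semiconj.inverse_left he e.left_inv e.right_inv⟩

theorem Iso.trans : Iso A B → Iso B C → Iso A C
  | ⟨e, he⟩, ⟨e', he'⟩ => ⟨e.trans e', Semiconj.trans he he'⟩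

end Iso

theorem closure_mono {A : MonoUnary} {X Y : Set A.carrier} (h : X ⊆ Y) :
    A.closure X ⊆ A.closure Y := fun _ ⟨x, hx, n, hn⟩ => ⟨x, h hx, n, hn⟩

theorem image_closure_subset {A B : MonoUnary} {g : A.carrier → B.carrier}
    (h : Semiconj g A.op B.op) (X : Set A.carrier) :
    g '' A.closure X ⊆ B.closure (g '' X) := by
  rintro _ ⟨_, ⟨x, hx, n, rfl⟩, rfl⟩
  exact ⟨g x, mem_image_of_mem g hx, n, ((h.iterate_right n) x).symm⟩

theorem largeEmb_iff {A B : MonoUnary} :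
    LargeEmb A B ↔ ∃ g : A.carrier → B.carrier, Injective g ∧ Semiconj g A.op B.op ∧
      Nonempty A.carrier ∧ ∃ b, B.closure (range g ∪ {b}) = univ := by
  constructor
  · rintro ⟨S, hS, ⟨s, hs⟩, ⟨e, he⟩, b, hb⟩
    have hrange : range (fun x => (e x).1) = S := ext fun y =>
      ⟨fun ⟨x, hx⟩ => hx ▸ (e x).2,
        fun hy => ⟨e.symm ⟨y, hy⟩, congrArg Subtype.val (e.apply_symm_apply _)⟩⟩
    exact ⟨fun x => (e x).1, Subtype.val_injective.comp e.injective,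
      fun x => congrArg Subtype.val (he x), ⟨e.symm ⟨s, hs⟩⟩, b, by rwa [hrange]⟩
  · rintro ⟨g, hg, h, ⟨a⟩, b, hb⟩
    have hclosed : ∀ y ∈ range g, B.op y ∈ range g := by
      rintro _ ⟨x, rfl⟩
      exact ⟨A.op x, h x⟩
    exact ⟨range g, hclosed, ⟨g a, a, rfl⟩,
      ⟨Equiv.ofInjective g hg, fun x => Subtype.ext (h x)⟩, b, hb⟩

theorem LargeEmb.nonempty_left {A B : MonoUnary} (h : LargeEmb A B) : Nonempty A.carrier := by
  obtain ⟨-, -, -, hA, -⟩ := largeEmb_iff.1 h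
  exact hA

theorem LargeEmb.nonempty_right {A B : MonoUnary} (h : LargeEmb A B) : Nonempty B.carrier := by
  obtain ⟨g, -, -, ⟨a⟩, -⟩ := largeEmb_iff.1 h
  exact ⟨g a⟩

theorem Step.nonempty_left {A B : MonoUnary} : Step A B → Nonempty A.carrier
  | .inl h => h.nonempty_left
  | .inr h => h.nonempty_right

theorem exists_hasPath_of_dis_lt_top {A B : MonoUnary} (h : dis A B < ⊤) :
    ∃ n : ℕ, (n : ℕ∞) = dis A B ∧ HasPath A B n := by
  have hne : {q : ℕ∞ | ∃ n : ℕ, q = n ∧ HasPath A B n}.Nonempty :=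
    nonempty_iff_ne_empty.2 fun hempty => by simp [dis, hempty] at h
  obtain ⟨n, hn, hpath⟩ := csInf_mem hne
  exact ⟨n, hn.symm, hpath⟩

structure NaturalCongruence where
  rel : ∀ A : MonoUnary, A.carrier → A.carrier → Prop
  equivalence : ∀ A, Equivalence (rel A)
  rel_op : ∀ {A x y}, rel A x y → rel A (A.op x) (A.op y)
  rel_map_iff : ∀ {A B : MonoUnary} {g : A.carrier → B.carrier}, Injective g →
    Semiconj g A.op B.op → ∀ x y, rel B (g x) (g y) ↔ rel A x y

namespace NaturalCongruence

instance : Min NaturalCongruence where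
  min c d :=
    { rel := fun A x y => c.rel A x y ∧ d.rel A x y
      equivalence := fun A =>
        ⟨fun x => ⟨(c.equivalence A).refl x, (d.equivalence A).refl x⟩,
          fun h => ⟨(c.equivalence A).symm h.1, (d.equivalence A).symm h.2⟩,
          fun h h' => ⟨(c.equivalence A).trans h.1 h'.1, (d.equivalence A).trans h.2 h'.2⟩⟩
      rel_op := fun h => ⟨c.rel_op h.1, d.rel_op h.2⟩
      rel_map_iff := fun hg h x y =>
        and_congr (c.rel_map_iff hg h x y) (d.rel_map_iff hg h x y) }

variable (c : NaturalCongruence)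

def setoid (A : MonoUnary) : Setoid A.carrier := ⟨c.rel A, c.equivalence A⟩

abbrev quotient (A : MonoUnary) : MonoUnary where
  carrier := Quotient (c.setoid A)
  op := Quotient.map A.op fun _ _ => c.rel_op

theorem semiconj_mk (A : MonoUnary) :
    Semiconj (Quotient.mk (c.setoid A)) A.op (c.quotient A).op := fun _ => rfl

theorem isFixedPt_mk {A : MonoUnary} {x : A.carrier} (h : c.rel A x (A.op x)) :
    (c.quotient A).op (Quotient.mk _ x) = Quotient.mk _ x :=
  Quotient.sound ((c.equivalence A).symm h)

theorem iso_quotient {A B : MonoUnary} : Iso A B → Iso (c.quotient A) (c.quotient B)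
  | ⟨e, he⟩ => ⟨Quotient.congr e fun x y => (c.rel_map_iff e.injective he x y).symm,
      fun q => Quotient.inductionOn q fun x => congrArg (Quotient.mk _) (he x)⟩

theorem iso_quotient_self {A : MonoUnary} (h : ∀ x y, c.rel A x y → x = y) :
    Iso (c.quotient A) A := by
  let e : A.carrier ≃ (c.quotient A).carrier := Equiv.ofBijective (Quotient.mk _)
    ⟨fun x y hxy => h x y (Quotient.exact hxy), Quotient.mk_surjective⟩
  exact Iso.symm ⟨e, c.semiconj_mk A⟩

theorem largeEmb_quotient {A B : MonoUnary} (h : LargeEmb A B) :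
    LargeEmb (c.quotient A) (c.quotient B) := by
  obtain ⟨g, hg, hsemi, ⟨a⟩, b, hb⟩ := largeEmb_iff.1 h
  let π := Quotient.mk (c.setoid B)
  let G : (c.quotient A).carrier → (c.quotient B).carrier :=
    Quotient.map g fun x y => (c.rel_map_iff hg hsemi x y).2
  have hG : Injective G := fun p q => Quotient.inductionOn₂ p q fun x y hxy =>
    Quotient.sound ((c.rel_map_iff hg hsemi x y).1 (Quotient.exact hxy))
  have hGsemi : Semiconj G (c.quotient A).op (c.quotient B).op := fun q =>
    Quotient.inductionOn q fun x => congrArg π (hsemi x)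
  have hsub : π '' (range g ∪ {b}) ⊆ range G ∪ {π b} := by
    rintro _ ⟨y, ⟨x, rfl⟩ | rfl, rfl⟩
    · exact Or.inl ⟨Quotient.mk _ x, rfl⟩
    · exact Or.inr rfl
  refine largeEmb_iff.2 ⟨G, hG, hGsemi, ⟨Quotient.mk _ a⟩, π b, eq_univ_of_univ_subset ?_⟩
  rw [← image_univ_of_surjective Quotient.mk_surjective, ← hb]
  exact (image_closure_subset (c.semiconj_mk B) _).trans (closure_mono hsub)

theorem step_quotient {A B : MonoUnary} : Step A B → Step (c.quotient A) (c.quotient B)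
  | .inl h => .inl (c.largeEmb_quotient h)
  | .inr h => .inr (c.largeEmb_quotient h)

end NaturalCongruence

def Linked (A : MonoUnary) (x y : A.carrier) : Prop := ∃ k m : ℕ, A.op^[k] x = A.op^[m] y

def IsPreperiodic (A : MonoUnary) (x : A.carrier) : Prop := ∃ k, A.op^[k] x ∈ periodicPts A.op

def IsTerminal (A : MonoUnary) (x : A.carrier) : Prop :=
  x ∈ periodicPts A.op ∨ ¬ A.IsPreperiodic x

theorem linked_map_iff {A B : MonoUnary} {g : A.carrier → B.carrier} (hg : Injective g)
    (h : Semiconj g A.op B.op) (x y : A.carrier) : B.Linked (g x) (g y) ↔ A.Linked x y := by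
  simp only [Linked, ← (h.iterate_right _) _, hg.eq_iff]

theorem isPreperiodic_map_iff {A B : MonoUnary} {g : A.carrier → B.carrier} (hg : Injective g)
    (h : Semiconj g A.op B.op) (x : A.carrier) : B.IsPreperiodic (g x) ↔ A.IsPreperiodic x := by
  simp only [IsPreperiodic, ← (h.iterate_right _) _, hg.mem_periodicPts_iff h]

theorem isTerminal_map_iff {A B : MonoUnary} {g : A.carrier → B.carrier} (hg : Injective g)
    (h : Semiconj g A.op B.op) (x : A.carrier) : B.IsTerminal (g x) ↔ A.IsTerminal x := by
  rw [IsTerminal, IsTerminal, hg.mem_periodicPts_iff h, isPreperiodic_map_iff hg h]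

theorem IsTerminal.op {A : MonoUnary} {x : A.carrier} : A.IsTerminal x → A.IsTerminal (A.op x)
  | .inl ⟨n, hn, hx⟩ => .inl ⟨n, hn, hx.apply⟩
  | .inr hx => .inr fun ⟨k, hk⟩ => hx ⟨k + 1, hk⟩

theorem exists_isTerminal_iterate (A : MonoUnary) (x : A.carrier) :
    ∃ k, A.IsTerminal (A.op^[k] x) := by
  by_cases hx : A.IsPreperiodic x
  · obtain ⟨k, hk⟩ := hx
    exact ⟨k, .inl hk⟩
  · exact ⟨0, .inr hx⟩

def linked : NaturalCongruence where
  rel := Linked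
  equivalence A :=
    { refl := fun _ => ⟨0, 0, rfl⟩
      symm := fun ⟨k, m, h⟩ => ⟨m, k, h.symm⟩
      trans := fun {x _ z} ⟨k, m, h⟩ ⟨k', m', h'⟩ => ⟨k' + k, m + m', by
        rw [iterate_add_apply, h, ← iterate_add_apply, Nat.add_comm, iterate_add_apply, h',
          ← iterate_add_apply]⟩ }
  rel_op := fun {A x y} ⟨k, m, h⟩ => ⟨k, m, by
    rw [Commute.iterate_self A.op k x, Commute.iterate_self A.op m y, h]⟩
  rel_map_iff := linked_map_iff

def collapse : NaturalCongruence where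
  rel A x y := x = y ∨ (A.IsTerminal x ∧ A.IsTerminal y)
  equivalence A :=
    { refl := fun _ => .inl rfl
      symm := fun
        | .inl h => .inl h.symm
        | .inr h => .inr h.symm
      trans := fun
        | .inl rfl, h => h
        | .inr h, .inl rfl => .inr h
        | .inr h, .inr h' => .inr ⟨h.1, h'.2⟩ }
  rel_op := fun
    | .inl rfl => .inl rfl
    | .inr h => .inr ⟨h.1.op, h.2.op⟩
  rel_map_iff hg h x y := by
    rw [hg.eq_iff, isTerminal_map_iff hg h, isTerminal_map_iff hg h]

theorem collapse_rel_op_self {A : MonoUnary} {x : A.carrier} (hx : A.IsTerminal x) :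
    collapse.rel A x (A.op x) :=
  .inr ⟨hx, hx.op⟩

theorem isForest_quotient (c : NaturalCongruence)
    (hc : ∀ A x, A.IsTerminal x → c.rel A x (A.op x)) (A : MonoUnary) :
    IsForest (c.quotient A) := by
  intro q
  induction q using Quotient.inductionOn with
  | h x =>
    obtain ⟨k, hk⟩ := A.exists_isTerminal_iterate x
    exact ⟨Quotient.mk _ (A.op^[k] x), c.isFixedPt_mk (hc A _ hk), k, 0,
      ((c.semiconj_mk A).iterate_right k x).symm⟩

theorem isForest_quotient_collapse_inf_linked (A : MonoUnary) :
    IsForest ((collapse ⊓ linked).quotient A) :=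
  isForest_quotient (collapse ⊓ linked) (fun _ _ hx => ⟨collapse_rel_op_self hx, 1, 0, rfl⟩) A

theorem isTree_quotient_collapse {A : MonoUnary} (hA : Nonempty A.carrier) :
    IsTree (collapse.quotient A) := by
  refine ⟨fun p q => ?_, ?_⟩
  · obtain ⟨x, rfl⟩ := Quotient.mk_surjective p
    obtain ⟨y, rfl⟩ := Quotient.mk_surjective q
    obtain ⟨k, hk⟩ := A.exists_isTerminal_iterate x
    obtain ⟨m, hm⟩ := A.exists_isTerminal_iterate y
    refine ⟨k, m, ?_⟩
    rw [← (collapse.semiconj_mk A).iterate_right, ← (collapse.semiconj_mk A).iterate_right]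
    exact Quotient.sound (.inr ⟨hk, hm⟩)
  · obtain ⟨a⟩ := hA
    obtain ⟨c, hc, -⟩ :=
      isForest_quotient collapse (fun _ _ => collapse_rel_op_self) A (Quotient.mk _ a)
    exact ⟨c, hc⟩

theorem IsForest.op_eq_self_of_isTerminal {F : MonoUnary} (hF : IsForest F) {x : F.carrier}
    (hx : F.IsTerminal x) : F.op x = x := by
  obtain ⟨c, hc, k, m, hkm⟩ := hF x
  rw [iterate_fixed hc] at hkm
  have hc_periodic : IsPeriodicPt F.op 1 (F.op^[k] x) := by rw [hkm]; exact hc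
  have hx_periodic : x ∈ periodicPts F.op :=
    hx.resolve_right fun h => h ⟨k, mk_mem_periodicPts one_pos hc_periodic⟩
  have hx_fixed : IsPeriodicPt F.op 1 x :=
    isPeriodicPt_of_mem_periodicPts_of_isPeriodicPt_iterate hx_periodic hc_periodic
  exact hx_fixed

theorem IsForest.eq_of_rel {F : MonoUnary} (hF : IsForest F) {x y : F.carrier}
    (h : (collapse ⊓ linked).rel F x y) : x = y := by
  obtain ⟨rfl | ⟨hx, hy⟩, k, m, hkm⟩ := h
  · rfl
  rwa [iterate_fixed (hF.op_eq_self_of_isTerminal hx),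
    iterate_fixed (hF.op_eq_self_of_isTerminal hy)] at hkm

theorem IsTree.isForest {T : MonoUnary} (hT : IsTree T) : IsForest T :=
  fun x => hT.2.elim fun c hc => ⟨c, hc, hT.1 x c⟩

theorem IsTree.eq_of_rel {T : MonoUnary} (hT : IsTree T) {x y : T.carrier}
    (h : collapse.rel T x y) : x = y :=
  hT.isForest.eq_of_rel ⟨h, hT.1 x y⟩

end MonoUnary

open MonoUnary in
/-- (1) two forest-algebras at finite distance are connected by some
minimal-length path consisting only of forest-algebras; (2) two tree-algebras at
finite distance are connected by some minimal-length path consisting only of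
tree-algebras. -/
theorem minimal_paths_of_forests_and_trees :
    (∀ F₁ F₂ : MonoUnary, IsForest F₁ → IsForest F₂ → dis F₁ F₂ < ⊤ →
      ∃ n : ℕ, (n : ℕ∞) = dis F₁ F₂ ∧
        ∃ C : ℕ → MonoUnary, Iso (C 0) F₁ ∧ Iso (C n) F₂ ∧
          (∀ i ≤ n, IsForest (C i)) ∧ ∀ i < n, Step (C i) (C (i + 1))) ∧
    (∀ T₁ T₂ : MonoUnary, IsTree T₁ → IsTree T₂ → dis T₁ T₂ < ⊤ →
      ∃ n : ℕ, (n : ℕ∞) = dis T₁ T₂ ∧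
        ∃ C : ℕ → MonoUnary, Iso (C 0) T₁ ∧ Iso (C n) T₂ ∧
          (∀ i ≤ n, IsTree (C i)) ∧ ∀ i < n, Step (C i) (C (i + 1))) := by
  refine ⟨fun F₁ F₂ h₁ h₂ hdis => ?_, fun T₁ T₂ h₁ h₂ hdis => ?_⟩
  · obtain ⟨n, hn, C, h₀, hₙ, hstep⟩ := exists_hasPath_of_dis_lt_top hdis
    let c := collapse ⊓ linked
    exact ⟨n, hn, fun i => c.quotient (C i),
      (c.iso_quotient h₀).trans (c.iso_quotient_self fun _ _ => h₁.eq_of_rel),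
      (c.iso_quotient hₙ).trans (c.iso_quotient_self fun _ _ => h₂.eq_of_rel),
      fun i _ => isForest_quotient_collapse_inf_linked (C i),
      fun i hi => c.step_quotient (hstep i hi)⟩
  · obtain ⟨n, hn, C, h₀, hₙ, hstep⟩ := exists_hasPath_of_dis_lt_top hdis
    have hne : ∀ i ≤ n, Nonempty (C i).carrier := fun i hi => by
      rcases hi.lt_or_eq with hi | rfl
      · exact (hstep i hi).nonempty_left
      · obtain ⟨e, -⟩ := hₙ
        obtain ⟨root, -⟩ := h₂.2
        exact ⟨e.symm root⟩
    exact ⟨n, hn, fun i => collapse.quotient (C i),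
      (collapse.iso_quotient h₀).trans (collapse.iso_quotient_self fun _ _ => h₁.eq_of_rel),
      (collapse.iso_quotient hₙ).trans (collapse.iso_quotient_self fun _ _ => h₂.eq_of_rel),
      fun i hi => isTree_quotient_collapse (hne i hi),
      fun i hi => collapse.step_quotient (hstep i hi)⟩
end

section
/- Let 𝔹 be the four-element Boolean lattice {0, a, b, 1} (with a, b incomparable) and let K be the class of all sublattices of 𝔹. Then K has the push-up property, but K does not have the amalgamation property. -/
namespace B4Network

/-- The four-element Boolean lattice `{0, a, b, 1}` with `a`, `b` incomparable,
realized as `Bool × Bool`. -/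
abbrev B4 : Type := Bool × Bool

/-- The class `K` of all sublattices of `B4`: nonempty subsets closed under meet
and join. -/
def K : Set (Set B4) := {S | S.Nonempty ∧ IsSublattice S}

/-- An isomorphism between the sublattices `A` and `C`: a bijection that commutes
with the meets and joins (computed in the ambient lattice, under which `A` and `C`
are closed). -/
def LatIso (A C : Set B4) : Prop :=
  ∃ e : ↥A ≃ ↥C, ∀ x y z : ↥A,
    ((z : B4) = (x : B4) ⊔ (y : B4) → ((e z : B4) = (e x : B4) ⊔ (e y : B4))) ∧
    ((z : B4) = (x : B4) ⊓ (y : B4) → ((e z : B4) = (e x : B4) ⊓ (e y : B4)))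

/-- A lattice embedding of the sublattice `A` into the sublattice `C`: an injective
map commuting with meets and joins. -/
def LatEmb (A C : Set B4) (h : ↥A → ↥C) : Prop :=
  Function.Injective h ∧ ∀ x y z : ↥A,
    ((z : B4) = (x : B4) ⊔ (y : B4) → ((h z : B4) = (h x : B4) ⊔ (h y : B4))) ∧
    ((z : B4) = (x : B4) ⊓ (y : B4) → ((h z : B4) = (h x : B4) ⊓ (h y : B4)))

/-- `A` is largely embeddable into `B` in `K`: some `C ∈ K` with `C ⊆ B` is
isomorphic to `A` and, together with one extra element `b ∈ B`, generates `B`. -/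
def LargeEmb (A B : Set B4) : Prop :=
  ∃ C ∈ K, C ⊆ B ∧ LatIso A C ∧ ∃ b ∈ B, latticeClosure (C ∪ {b}) = B

/-- `K` has the push-up property. -/
def PushUp : Prop :=
  ∀ A ∈ K, ∀ B ∈ K, (∃ C ∈ K, LargeEmb C A ∧ LargeEmb C B) →
    ∃ D ∈ K, LargeEmb A D ∧ LargeEmb B D

/-- `K` has the amalgamation property. -/
def Amalg : Prop :=
  ∀ A ∈ K, ∀ B ∈ K, ∀ C ∈ K, ∀ (f : ↥C → ↥A) (g : ↥C → ↥B),
    LatEmb C A f → LatEmb C B g →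
      ∃ D ∈ K, ∃ (f' : ↥A → ↥D) (g' : ↥B → ↥D),
        LatEmb A D f' ∧ LatEmb B D g' ∧ ∀ x : ↥C, f' (f x) = g' (g x)

end B4Network

namespace B4Network

def oo : B4 := (false, false)
def aa : B4 := (true, false)
def bb : B4 := (false, true)
def ii : B4 := (true, true)

lemma mem_cases (x : B4) : x = oo ∨ x = aa ∨ x = bb ∨ x = ii := by revert x; decide

lemma closure_eq_univ {S : Set B4} (ha : aa ∈ latticeClosure S) (hb : bb ∈ latticeClosure S) :
    latticeClosure S = Set.univ := by
  have h0 : oo ∈ latticeClosure S := by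
    have := isSublattice_latticeClosure (s := S) |>.infClosed ha hb
    have e : aa ⊓ bb = oo := by decide
    rwa [e] at this
  have h1 : ii ∈ latticeClosure S := by
    have := isSublattice_latticeClosure (s := S) |>.supClosed ha hb
    have e : aa ⊔ bb = ii := by decide
    rwa [e] at this
  apply Set.eq_univ_of_forall
  intro x
  rcases mem_cases x with rfl | rfl | rfl | rfl <;> assumption

lemma sing_sub : IsSublattice ({aa} : Set B4) := by
  constructor <;> (rintro x rfl y rfl) <;> simp

lemma oa_sub : IsSublattice ({oo, aa} : Set B4) := by
  constructor <;> (rintro x (rfl|rfl) y (rfl|rfl)) <;> simp [Set.mem_insert_iff] <;> decide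

lemma sing_largeEmb (v : B4) : LargeEmb ({v} : Set B4) Set.univ := by
  refine ⟨{aa}, ⟨⟨aa, rfl⟩, sing_sub⟩, Set.subset_univ _,
    ⟨⟨fun _ => ⟨aa, rfl⟩, fun _ => ⟨v, rfl⟩, fun x => Subtype.ext x.2.symm,
      fun x => Subtype.ext x.2.symm⟩, ?_⟩, bb, Set.mem_univ _, ?_⟩
  · rintro ⟨x, rfl⟩ ⟨y, hy⟩ ⟨z, hz⟩
    constructor <;> intro _ <;> exact (by decide : (aa:B4) = aa ⊔ aa)
  · exact closure_eq_univ (subset_latticeClosure (Or.inl rfl)) (subset_latticeClosure (Or.inr rfl))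

lemma two_largeEmb : LargeEmb ({oo, ii} : Set B4) Set.univ := by
  refine ⟨{oo, aa}, ⟨⟨oo, Or.inl rfl⟩, oa_sub⟩, Set.subset_univ _,
    ⟨⟨fun x => if (x : B4).1 then ⟨aa, Or.inr rfl⟩ else ⟨oo, Or.inl rfl⟩,
      fun x => if (x : B4).1 then ⟨ii, Or.inr rfl⟩ else ⟨oo, Or.inl rfl⟩, ?_, ?_⟩, ?_⟩,
    bb, Set.mem_univ _, ?_⟩
  · rintro ⟨x, (rfl | rfl)⟩ <;> rfl
  · rintro ⟨x, (rfl | rfl)⟩ <;> rfl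
  · rintro ⟨x, (rfl | rfl)⟩ ⟨y, (rfl | rfl)⟩ ⟨z, (rfl | rfl)⟩ <;>
      constructor <;> intro h <;> first | rfl | (exfalso; revert h; decide)
  · exact closure_eq_univ (subset_latticeClosure (Or.inl (Or.inr rfl)))
      (subset_latticeClosure (Or.inr rfl))

lemma largeEmb_univ (A : Set B4) (hA : A ∈ K) : LargeEmb A Set.univ := by
  by_cases h1 : aa ∈ A
  · refine ⟨A, hA, Set.subset_univ _, ⟨Equiv.refl _, fun x y z => ⟨fun h => h, fun h => h⟩⟩,
      bb, Set.mem_univ _, ?_⟩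
    exact closure_eq_univ (subset_latticeClosure (Or.inl h1)) (subset_latticeClosure (Or.inr rfl))
  by_cases h2 : bb ∈ A
  · refine ⟨A, hA, Set.subset_univ _, ⟨Equiv.refl _, fun x y z => ⟨fun h => h, fun h => h⟩⟩,
      aa, Set.mem_univ _, ?_⟩
    exact closure_eq_univ (subset_latticeClosure (Or.inr rfl)) (subset_latticeClosure (Or.inl h2))
  by_cases h3 : oo ∈ A <;> by_cases h4 : ii ∈ A
  · have : A = {oo, ii} := by
      apply Set.eq_of_subset_of_subset
      · intro x hx
        rcases mem_cases x with rfl | rfl | rfl | rfl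
        · exact Or.inl rfl
        · exact absurd hx h1
        · exact absurd hx h2
        · exact Or.inr rfl
      · rintro x (rfl | rfl) <;> assumption
    rw [this]; exact two_largeEmb
  · have : A = {oo} := by
      apply Set.eq_of_subset_of_subset
      · intro x hx
        rcases mem_cases x with rfl | rfl | rfl | rfl
        · rfl
        · exact absurd hx h1
        · exact absurd hx h2
        · exact absurd hx h4
      · rintro x rfl; assumption
    rw [this]; exact sing_largeEmb oo
  · have : A = {ii} := by
      apply Set.eq_of_subset_of_subset
      · intro x hx
        rcases mem_cases x with rfl | rfl | rfl | rfl
        · exact absurd hx h3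
        · exact absurd hx h1
        · exact absurd hx h2
        · rfl
      · rintro x rfl; assumption
    rw [this]; exact sing_largeEmb ii
  · exfalso
    obtain ⟨x, hx⟩ := hA.1
    rcases mem_cases x with rfl | rfl | rfl | rfl
    exacts [h3 hx, h1 hx, h2 hx, h4 hx]

lemma univ_mem_K : (Set.univ : Set B4) ∈ K := by
  refine ⟨⟨oo, trivial⟩, ?_⟩
  constructor <;> intro _ _ _ _ <;> trivial

lemma pushUp : PushUp := by
  intro A hA B hB _
  exact ⟨Set.univ, univ_mem_K, largeEmb_univ A hA, largeEmb_univ B hB⟩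

def Ch2 : Set B4 := {oo, ii}
def Ch3 : Set B4 := {oo, aa, ii}

lemma ch2_mem_K : Ch2 ∈ K := by
  refine ⟨⟨oo, Or.inl rfl⟩, ?_⟩
  constructor <;> (rintro x (rfl|rfl) y (rfl|rfl)) <;>
    simp [Ch2, Set.mem_insert_iff] <;> decide

lemma ch3_mem_K : Ch3 ∈ K := by
  refine ⟨⟨oo, Or.inl rfl⟩, ?_⟩
  constructor <;> (rintro x (rfl|rfl|rfl) y (rfl|rfl|rfl)) <;>
    simp [Ch3, Set.mem_insert_iff] <;> decide

def ao : ↥Ch3 := ⟨oo, Or.inl rfl⟩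
def aA : ↥Ch3 := ⟨aa, Or.inr (Or.inl rfl)⟩
def ai : ↥Ch3 := ⟨ii, Or.inr (Or.inr rfl)⟩

def fmap : ↥Ch2 → ↥Ch3 := fun x => if (x : B4) = oo then ao else aA
def gmap : ↥Ch2 → ↥Ch3 := fun x => if (x : B4) = oo then aA else ai

lemma fmap_emb : LatEmb Ch2 Ch3 fmap := by
  constructor
  · rintro ⟨x, (rfl|rfl)⟩ ⟨y, (rfl|rfl)⟩ h <;>
      first | rfl | (exfalso; revert h; simp [fmap, ao, aA, oo, ii, aa])
  · rintro ⟨x, (rfl|rfl)⟩ ⟨y, (rfl|rfl)⟩ ⟨z, (rfl|rfl)⟩ <;>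
      constructor <;> intro h <;>
      (simp only [fmap, ao, aA]; revert h; decide)

lemma gmap_emb : LatEmb Ch2 Ch3 gmap := by
  constructor
  · rintro ⟨x, (rfl|rfl)⟩ ⟨y, (rfl|rfl)⟩ h <;>
      first | rfl | (exfalso; revert h; simp [gmap, ai, aA, oo, ii, aa])
  · rintro ⟨x, (rfl|rfl)⟩ ⟨y, (rfl|rfl)⟩ ⟨z, (rfl|rfl)⟩ <;>
      constructor <;> intro h <;>
      (simp only [gmap, ai, aA]; revert h; decide)

lemma no_chain4 :
    ∀ p q r s : B4, q = p ⊔ q → p ≠ q → r = q ⊔ r → q ≠ r → s = r ⊔ s → r ≠ s → False := by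
  decide

lemma not_amalg : ¬ Amalg := by
  intro h
  obtain ⟨D, hD, f', g', hf', hg', hcomm⟩ :=
    h Ch3 ch3_mem_K Ch3 ch3_mem_K Ch2 ch2_mem_K fmap gmap fmap_emb gmap_emb
  have e1 : f' ao = g' aA := hcomm ⟨oo, Or.inl rfl⟩
  have e2 : f' aA = g' ai := hcomm ⟨ii, Or.inr rfl⟩
  have hpq : (g' aA : B4) = (g' ao : B4) ⊔ (g' aA : B4) :=
    (hg'.2 ao aA aA).1 (by decide)
  have hqr : (f' aA : B4) = (f' ao : B4) ⊔ (f' aA : B4) :=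
    (hf'.2 ao aA aA).1 (by decide)
  have hrs : (f' ai : B4) = (f' aA : B4) ⊔ (f' ai : B4) :=
    (hf'.2 aA ai ai).1 (by decide)
  have npq : (g' ao : B4) ≠ (g' aA : B4) := by
    intro h'
    have := hg'.1 (Subtype.ext h')
    exact absurd (congrArg Subtype.val this) (by decide)
  have nqr : (f' ao : B4) ≠ (f' aA : B4) := by
    intro h'
    have := hf'.1 (Subtype.ext h')
    exact absurd (congrArg Subtype.val this) (by decide)
  have nrs : (f' aA : B4) ≠ (f' ai : B4) := by
    intro h'
    have := hf'.1 (Subtype.ext h')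
    exact absurd (congrArg Subtype.val this) (by decide)
  rw [e1, e2] at hqr nqr
  rw [e2] at hrs nrs
  exact no_chain4 (g' ao : B4) (g' aA : B4) (g' ai : B4) (f' ai : B4)
    hpq npq hqr nqr hrs nrs

end B4Network


/-- the class of all sublattices of the four-element Boolean lattice has
the push-up property but not the amalgamation property. -/
theorem b4_pushUp_not_amalg : B4Network.PushUp ∧ ¬ B4Network.Amalg := by
  exact ⟨B4Network.pushUp, B4Network.not_amalg⟩
end
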